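/- arXiv:1704.04262 — 5 statements merged into one kernel-verified Lean document; each statement's English description precedes it below -/
import Mathlib

section
/- Let G be a graph, C a shortest odd hole in G (an induced odd cycle of length at least 5 of minimum odd length), and v a vertex of G not on C. If R is a path of C of length at least 2 whose ends are adjacent to v and whose internal vertices are all non-adjacent to v, and the length of R is less than |V(C)| - 2, then the length of R is even. -/
open SimpleGraph

/-- The bull: a triangle 0,1,2 with pendant edges 0–3 and 1–4. -/
def bull : SimpleGraph (Fin 5) :=
  SimpleGraph.fromRel (fun a b =>
    (a, b) ∈ [((0 : Fin 5), (1 : Fin 5)), (0, 2), (1, 2), (0, 3), (1, 4)])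

/-- `G` has an induced copy of `H`. -/
def Contains {V W : Type*} (G : SimpleGraph V) (H : SimpleGraph W) : Prop :=
  Nonempty (H ↪g G)

/-- `G` has an odd hole: an induced cycle of odd length at least 5. -/
def HasOddHole {V : Type*} (G : SimpleGraph V) : Prop :=
  ∃ n, 5 ≤ n ∧ Odd n ∧ Nonempty (SimpleGraph.cycleGraph n ↪g G)

/-- `e` exhibits a shortest odd hole in `G`. -/
def IsShortestOddHole {V : Type*} (G : SimpleGraph V) {k : ℕ}
    (_e : SimpleGraph.cycleGraph k ↪g G) : Prop :=
  5 ≤ k ∧ Odd k ∧ ∀ m, 5 ≤ m → Odd m → Nonempty (SimpleGraph.cycleGraph m ↪g G) → k ≤ m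

/-- The hole given by `e` is clean: the neighbours on the hole of any vertex off the hole
are contained in a two-edge path `i-1, i, i+1` of the hole. -/
def CleanHole {V : Type*} (G : SimpleGraph V) {k : ℕ}
    (e : SimpleGraph.cycleGraph k ↪g G) : Prop :=
  ∀ v : V, (∀ j, e j ≠ v) →
    ∃ i : Fin k, ∀ j, G.Adj v (e j) → j = i ∨ (SimpleGraph.cycleGraph k).Adj i j

/-- `G` is pure: it has no odd hole, or some shortest odd hole of `G` is clean. -/
def IsPure {V : Type*} (G : SimpleGraph V) : Prop :=
  ¬ HasOddHole G ∨
    ∃ (k : ℕ) (e : SimpleGraph.cycleGraph k ↪g G), IsShortestOddHole G e ∧ CleanHole G e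

/-- `p`, `c`, `a` form an anchor in `G`: `p` is an induced 4-vertex path, `c` is complete
to it, and `a` is anticomplete to it. -/
def IsAnchorIn {V : Type*} (G : SimpleGraph V) (p : Fin 4 → V) (c a : V) : Prop :=
  Function.Injective p ∧ (∀ i, c ≠ p i) ∧ (∀ i, a ≠ p i) ∧ a ≠ c ∧
  (∀ i j : Fin 4, G.Adj (p i) (p j) ↔ ((i : ℕ) + 1 = j ∨ (j : ℕ) + 1 = i)) ∧
  (∀ i, G.Adj c (p i)) ∧ (∀ i, ¬ G.Adj a (p i))

/-- `G` contains an anchor. -/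
def ContainsAnchor {V : Type*} (G : SimpleGraph V) : Prop :=
  ∃ p c a, IsAnchorIn G p c a

/-- `X` is a homogeneous set of `G`. -/
def IsHomogeneousSet {V : Type*} [Fintype V] (G : SimpleGraph V) (X : Finset V) : Prop :=
  1 < X.card ∧ X.card < Fintype.card V ∧
    ∀ v ∉ X, (∀ x ∈ X, G.Adj v x) ∨ (∀ x ∈ X, ¬ G.Adj v x)

/-!
If the arc `R = e i, …, e (i + L)` had odd length `L`, then `R` closed up through `v` would be an
induced cycle of odd length `L + 2`, with `5 ≤ L + 2 < |V(C)|`, contradicting the minimality of `C`.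
The arc has no chord because it misses at least two vertices of `C`.
-/

namespace Fin

theorem val_sub_eq_one_iff {n : ℕ} (hn : 2 ≤ n) (a b : Fin n) :
    (a - b).val = 1 ↔ a.val = b.val + 1 ∨ (a.val = 0 ∧ b.val = n - 1) := by
  rcases le_or_gt b a with h | h
  · rw [coe_sub_iff_le.mpr h]; have := Fin.le_iff_val_le_val.mp h; omega
  · rw [coe_sub_iff_lt.mpr h]; have := Fin.lt_def.mp h; have := b.isLt; omega

end Fin

namespace SimpleGraph

theorem cycleGraph_adj_add_left {n : ℕ} [NeZero n] (i a b : Fin n) :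
    (cycleGraph n).Adj (i + a) (i + b) ↔ (cycleGraph n).Adj a b := by
  simp only [cycleGraph_adj', add_sub_add_left_eq_sub]

theorem cycleGraph_adj_iff_val {n : ℕ} (hn : 2 ≤ n) (a b : Fin n) :
    (cycleGraph n).Adj a b ↔ a.val = b.val + 1 ∨ b.val = a.val + 1 ∨
      (a.val = 0 ∧ b.val = n - 1) ∨ (b.val = 0 ∧ a.val = n - 1) := by
  rw [cycleGraph_adj', Fin.val_sub_eq_one_iff hn, Fin.val_sub_eq_one_iff hn]
  tauto

open Fin.NatCast in
theorem cycleGraph_adj_add_natCast {n : ℕ} [NeZero n] (i : Fin n) {a b : ℕ}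
    (ha : a + 1 < n) (hb : b + 1 < n) :
    (cycleGraph n).Adj (i + a) (i + b) ↔ a = b + 1 ∨ b = a + 1 := by
  rw [cycleGraph_adj_add_left, cycleGraph_adj_iff_val (by omega),
    Fin.val_cast_of_lt (by omega), Fin.val_cast_of_lt (by omega)]
  omega

open Fin.NatCast in
theorem Embedding.nonempty_cycleGraph_of_arc {V : Type*} {G : SimpleGraph V} {k : ℕ}
    [NeZero k] (e : cycleGraph k ↪g G) {v : V} (hv : ∀ j, e j ≠ v) (i : Fin k) {L : ℕ}
    (hLk : L + 2 ≤ k) (hvadj : ∀ t ≤ L, G.Adj v (e (i + t)) ↔ t = 0 ∨ t = L) :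
    Nonempty (cycleGraph (L + 2) ↪g G) := by
  let f : Fin (L + 2) → V := Fin.lastCases v fun t : Fin (L + 1) => e (i + (t : ℕ))
  have arc_adj (s t : Fin (L + 1)) : G.Adj (f s.castSucc) (f t.castSucc) ↔
      (cycleGraph (L + 2)).Adj s.castSucc t.castSucc := by
    simp only [f, Fin.lastCases_castSucc, e.map_rel_iff,
      cycleGraph_adj_add_natCast i (by omega : s.val + 1 < k) (by omega : t.val + 1 < k),
      cycleGraph_adj_iff_val (by omega : 2 ≤ L + 2), Fin.val_castSucc]
    omega
  have apex_adj (t : Fin (L + 1)) : G.Adj (f (Fin.last _)) (f t.castSucc) ↔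
      (cycleGraph (L + 2)).Adj (Fin.last _) t.castSucc := by
    simp only [f, Fin.lastCases_last, Fin.lastCases_castSucc, hvadj t (by omega),
      cycleGraph_adj_iff_val (by omega : 2 ≤ L + 2), Fin.val_castSucc, Fin.val_last]
    omega
  have f_inj : Function.Injective f := by
    intro s t hst
    induction s using Fin.lastCases <;> induction t using Fin.lastCases <;>
      simp only [f, Fin.lastCases_castSucc, Fin.lastCases_last] at hst
    · rfl
    · exact absurd hst.symm (hv _)
    · exact absurd hst (hv _)
    · have h := congrArg Fin.val (add_left_cancel (e.injective hst))
      rw [Fin.val_cast_of_lt (by omega), Fin.val_cast_of_lt (by omega)] at h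
      exact congrArg _ (Fin.ext h)
  refine ⟨⟨⟨f, f_inj⟩, fun {s t} => ?_⟩⟩
  induction s using Fin.lastCases <;> induction t using Fin.lastCases
  · simp
  · exact apex_adj _
  · rw [G.adj_comm, (cycleGraph _).adj_comm]; exact apex_adj _
  · exact arc_adj _ _

end SimpleGraph

open Fin.NatCast in
theorem stmt_0 {V : Type*} (G : SimpleGraph V) (k : ℕ) [NeZero k]
    (e : SimpleGraph.cycleGraph k ↪g G) (he : IsShortestOddHole G e)
    (v : V) (hv : ∀ j, e j ≠ v)
    (i : Fin k) (L : ℕ) (hL2 : 2 ≤ L) (hLk : L < k - 2)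
    (h1 : G.Adj v (e i)) (h2 : G.Adj v (e (i + (L : Fin k))))
    (hint : ∀ t : ℕ, 0 < t → t < L → ¬ G.Adj v (e (i + (t : Fin k)))) :
    Even L := by
  obtain ⟨-, -, hmin⟩ := he
  have hvadj (t : ℕ) (ht : t ≤ L) : G.Adj v (e (i + t)) ↔ t = 0 ∨ t = L := by
    refine ⟨fun h => ?_, ?_⟩
    · by_contra! hne
      exact hint t (by omega) (by omega) h
    · rintro (rfl | rfl)
      · simpa using h1
      · exact h2
  by_contra hL
  have hLodd : Odd L := Nat.not_even_iff_odd.mp hL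
  have hL3 : 3 ≤ L := by obtain ⟨m, rfl⟩ := hLodd; omega
  have := hmin (L + 2) (by omega) (hLodd.add_even even_two)
    (e.nonempty_cycleGraph_of_arc hv i (by omega) hvadj)
  omega
end

section
/- Every pyramid contains an induced bull. -/
open SimpleGraph

lemma bull_of_two_long {V : Type*} (G : SimpleGraph V) (b : Fin 3 → V)
    (n : Fin 3 → ℕ) (P : Fin 3 → ℕ → V)
    (hn : ∀ i, 1 ≤ n i)
    (hend : ∀ i, P i (n i) = b i)
    (hinj : ∀ i, ∀ s ≤ n i, ∀ t ≤ n i, P i s = P i t → s = t)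
    (hind : ∀ i, ∀ s ≤ n i, ∀ t ≤ n i, (G.Adj (P i s) (P i t) ↔ (s + 1 = t ∨ t + 1 = s)))
    (htri : ∀ i j, i ≠ j → G.Adj (b i) (b j))
    (hshare : ∀ i j, i ≠ j → ∀ s ≤ n i, ∀ t ≤ n j, P i s = P j t → s = 0 ∧ t = 0)
    (hedge : ∀ i j, i ≠ j → ∀ s, 0 < s → s ≤ n i → ∀ t, 0 < t → t ≤ n j →
      G.Adj (P i s) (P j t) → s = n i ∧ t = n j)
    (i j k : Fin 3) (hij : i ≠ j) (hik : i ≠ k) (hjk : j ≠ k)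
    (h2i : 2 ≤ n i) (h2j : 2 ≤ n j) : Contains G bull := by
  set p := P i (n i - 1) with hp
  set q := P j (n j - 1) with hq
  have hi1 : n i - 1 ≤ n i := Nat.sub_le _ _
  have hj1 : n j - 1 ≤ n j := Nat.sub_le _ _
  have hi0 : 0 < n i - 1 := by omega
  have hj0 : 0 < n j - 1 := by omega
  have hni : 0 < n i := by omega
  have hnj : 0 < n j := by omega
  have hnk : 0 < n k := hn k
  -- adjacencies
  have A01 : G.Adj (b i) (b j) := htri i j hij
  have A02 : G.Adj (b i) (b k) := htri i k hik
  have A12 : G.Adj (b j) (b k) := htri j k hjk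
  have A03 : G.Adj (b i) p := by
    rw [← hend i]
    exact (hind i (n i) le_rfl (n i - 1) hi1).mpr (Or.inr (by omega))
  have A14 : G.Adj (b j) q := by
    rw [← hend j]
    exact (hind j (n j) le_rfl (n j - 1) hj1).mpr (Or.inr (by omega))
  -- non-adjacencies
  have N04 : ¬ G.Adj (b i) q := fun h => by
    rw [← hend i] at h
    have := hedge i j hij _ hni le_rfl _ hj0 hj1 h; omega
  have N13 : ¬ G.Adj (b j) p := fun h => by
    rw [← hend j] at h
    have := hedge j i hij.symm _ hnj le_rfl _ hi0 hi1 h; omega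
  have N23 : ¬ G.Adj (b k) p := fun h => by
    rw [← hend k] at h
    have := hedge k i hik.symm _ hnk le_rfl _ hi0 hi1 h; omega
  have N24 : ¬ G.Adj (b k) q := fun h => by
    rw [← hend k] at h
    have := hedge k j hjk.symm _ hnk le_rfl _ hj0 hj1 h; omega
  have N34 : ¬ G.Adj p q := fun h => by
    have := hedge i j hij _ hi0 hi1 _ hj0 hj1 h; omega
  -- distinctness
  have D01 : b i ≠ b j := A01.ne
  have D02 : b i ≠ b k := A02.ne
  have D12 : b j ≠ b k := A12.ne
  have D03 : b i ≠ p := fun h => by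
    rw [← hend i] at h
    have := hinj i _ le_rfl _ hi1 h; omega
  have D14 : b j ≠ q := fun h => by
    rw [← hend j] at h
    have := hinj j _ le_rfl _ hj1 h; omega
  have D04 : b i ≠ q := fun h => by
    rw [← hend i] at h
    have := hshare i j hij _ le_rfl _ hj1 h; omega
  have D13 : b j ≠ p := fun h => by
    rw [← hend j] at h
    have := hshare j i hij.symm _ le_rfl _ hi1 h; omega
  have D23 : b k ≠ p := fun h => by
    rw [← hend k] at h
    have := hshare k i hik.symm _ le_rfl _ hi1 h; omega
  have D24 : b k ≠ q := fun h => by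
    rw [← hend k] at h
    have := hshare k j hjk.symm _ le_rfl _ hj1 h; omega
  have D34 : p ≠ q := fun h => by
    have := hshare i j hij _ hi1 _ hj1 h; omega
  clear_value p q
  clear hn hend hinj hind htri hshare hedge hp hq hi1 hj1 hi0 hj0 hni hnj hnk h2i h2j
  clear hij hik hjk n P
  refine ⟨⟨⟨![b i, b j, b k, p, q], ?_⟩, ?_⟩⟩
  · intro x y hxy
    fin_cases x <;> fin_cases y <;> simp_all <;>
      first
        | rfl
        | (exact absurd hxy (by tauto))
        | (exact absurd hxy.symm (by tauto))
  · intro x y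
    fin_cases x <;> fin_cases y <;>
      simp [bull, SimpleGraph.fromRel_adj] <;>
      first
        | exact A01 | exact A02 | exact A12 | exact A03 | exact A14
        | exact A01.symm | exact A02.symm | exact A12.symm | exact A03.symm | exact A14.symm
        | exact N04 | exact N13 | exact N23 | exact N24 | exact N34
        | exact fun h => N04 h.symm | exact fun h => N13 h.symm
        | exact fun h => N23 h.symm | exact fun h => N24 h.symm
        | exact fun h => N34 h.symm

/-- Every pyramid contains an induced bull. The pyramid is given by its base `b`,
apex `a`, and three induced paths `P i` (of length `n i`, listed by position). -/
theorem stmt_4 {V : Type*} (G : SimpleGraph V) (b : Fin 3 → V) (a : V)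
    (n : Fin 3 → ℕ) (P : Fin 3 → ℕ → V)
    (hn : ∀ i, 1 ≤ n i)
    (hstart : ∀ i, P i 0 = a) (hend : ∀ i, P i (n i) = b i)
    (hinj : ∀ i, ∀ s ≤ n i, ∀ t ≤ n i, P i s = P i t → s = t)
    (hind : ∀ i, ∀ s ≤ n i, ∀ t ≤ n i, (G.Adj (P i s) (P i t) ↔ (s + 1 = t ∨ t + 1 = s)))
    (htri : ∀ i j, i ≠ j → G.Adj (b i) (b j))
    (hshare : ∀ i j, i ≠ j → ∀ s ≤ n i, ∀ t ≤ n j, P i s = P j t → s = 0 ∧ t = 0)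
    (hedge : ∀ i j, i ≠ j → ∀ s, 0 < s → s ≤ n i → ∀ t, 0 < t → t ≤ n j →
      G.Adj (P i s) (P j t) → s = n i ∧ t = n j)
    (hapex : ∀ i j, G.Adj a (b i) → G.Adj a (b j) → i = j) :
    Contains G bull := by
  have adj_a : ∀ x, n x = 1 → G.Adj a (b x) := by
    intro x h
    have h1 := (hind x 0 (by omega) 1 (by omega)).mpr (Or.inl rfl)
    rw [hstart] at h1
    have h2 := hend x
    rw [h] at h2
    rwa [h2] at h1
  have notboth : ∀ x y : Fin 3, x ≠ y → n x = 1 → n y = 1 → False := by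
    intro x y hxy h1 h2
    exact hxy (hapex x y (adj_a x h1) (adj_a y h2))
  have H := bull_of_two_long G b n P hn hend hinj hind htri hshare hedge
  rcases Nat.lt_or_ge (n 0) 2 with h0 | h0
  · have h0' : n 0 = 1 := by have := hn 0; omega
    rcases Nat.lt_or_ge (n 1) 2 with h1 | h1
    · exact absurd (notboth 0 1 (by decide) h0' (by have := hn 1; omega)) (by simp)
    rcases Nat.lt_or_ge (n 2) 2 with h2 | h2
    · exact absurd (notboth 0 2 (by decide) h0' (by have := hn 2; omega)) (by simp)
    exact H 1 2 0 (by decide) (by decide) (by decide) h1 h2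
  rcases Nat.lt_or_ge (n 1) 2 with h1 | h1
  · rcases Nat.lt_or_ge (n 2) 2 with h2 | h2
    · exact absurd (notboth 1 2 (by decide) (by have := hn 1; omega)
        (by have := hn 2; omega)) (by simp)
    exact H 0 2 1 (by decide) (by decide) (by decide) h0 h2
  exact H 0 1 2 (by decide) (by decide) (by decide) h0 h1
end

section
/- Every jewel contains an induced C5, an induced bull, or an induced anchor. -/
open SimpleGraph

/-!
The only possible chords of the pentagon `v 0 … v 4` are `v 1 v 4` and `v 2 v 4`. A vertex of `F`
adjacent to both `v 0` and `v 3` closes the path `v 0 - v 1 - v 2 - v 3` into an induced `C5`.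
Otherwise a chord `v 1 v 4` makes `v 4 v 0 v 1` a triangle which, with `v 3` and a neighbour of
`v 0` in `F` as pendants, is a bull; symmetrically for a chord `v 2 v 4`; and without chords the
pentagon itself is an induced `C5`.
-/

section

variable {V W : Type*} {G : SimpleGraph V}

instance : DecidableRel bull.Adj := fun a b => decidable_of_iff _ (fromRel_adj _ a b).symm

theorem contains_of_adj_iff {H : SimpleGraph W} (hH : ∀ a b, (∀ c, H.Adj a c ↔ H.Adj b c) → a = b)
    (f : W → V) (hf : ∀ a b, G.Adj (f a) (f b) ↔ H.Adj a b) : Contains G H :=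
  ⟨⟨⟨f, fun a b hab => hH a b fun c => by rw [← hf, ← hf, hab]⟩, hf _ _⟩⟩

theorem contains_cycleGraph_five {a b c d e : V}
    (hab : G.Adj a b) (hbc : G.Adj b c) (hcd : G.Adj c d) (hde : G.Adj d e) (hae : G.Adj a e)
    (hac : ¬ G.Adj a c) (had : ¬ G.Adj a d) (hbd : ¬ G.Adj b d) (hbe : ¬ G.Adj b e)
    (hce : ¬ G.Adj c e) : Contains G (cycleGraph 5) :=
  contains_of_adj_iff (by decide) ![a, b, c, d, e] fun i j => by
    fin_cases i <;> fin_cases j <;> simp +decide <;> grind [G.adj_comm]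

theorem contains_bull {a b c d e : V}
    (hab : G.Adj a b) (hac : G.Adj a c) (hbc : G.Adj b c) (had : G.Adj a d) (hbe : G.Adj b e)
    (hae : ¬ G.Adj a e) (hbd : ¬ G.Adj b d) (hcd : ¬ G.Adj c d) (hce : ¬ G.Adj c e)
    (hde : ¬ G.Adj d e) : Contains G bull :=
  contains_of_adj_iff (by decide) ![a, b, c, d, e] fun i j => by
    fin_cases i <;> fin_cases j <;> simp +decide <;> grind [G.adj_comm]

end

theorem stmt_5_general {V : Type*} (G : SimpleGraph V)
    (v : Fin 5 → V) (F : Set V)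
    (he01 : G.Adj (v 0) (v 1)) (he12 : G.Adj (v 1) (v 2)) (he23 : G.Adj (v 2) (v 3))
    (he34 : G.Adj (v 3) (v 4)) (he40 : G.Adj (v 4) (v 0))
    (hn02 : ¬ G.Adj (v 0) (v 2)) (hn13 : ¬ G.Adj (v 1) (v 3)) (hn03 : ¬ G.Adj (v 0) (v 3))
    (hF1 : ∀ x ∈ F, ¬ G.Adj (v 1) x) (hF2 : ∀ x ∈ F, ¬ G.Adj (v 2) x)
    (hF4 : ∀ x ∈ F, ¬ G.Adj (v 4) x)
    (hv0 : ∃ x ∈ F, G.Adj (v 0) x) (hv3 : ∃ x ∈ F, G.Adj (v 3) x) :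
    Contains G (SimpleGraph.cycleGraph 5) ∨ Contains G bull ∨ ContainsAnchor G := by
  by_cases hcommon : ∃ x ∈ F, G.Adj (v 0) x ∧ G.Adj (v 3) x
  · obtain ⟨x, hx, hx0, hx3⟩ := hcommon
    exact .inl <| contains_cycleGraph_five he01 he12 he23 hx3 hx0 hn02 hn03 hn13
      (hF1 x hx) (hF2 x hx)
  push Not at hcommon
  by_cases h14 : G.Adj (v 1) (v 4)
  · obtain ⟨x, hx, hx0⟩ := hv0
    exact .inr <| .inl <| contains_bull he40 h14.symm he01 he34.symm hx0 (hF4 x hx) hn03 hn13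
      (hF1 x hx) (hcommon x hx hx0)
  by_cases h24 : G.Adj (v 2) (v 4)
  · obtain ⟨y, hy, hy3⟩ := hv3
    exact .inr <| .inl <| contains_bull he23 h24 he34 he12.symm hy3 (hF2 y hy) (hn13 ·.symm)
      (h14 ·.symm) (hF4 y hy) (hF1 y hy)
  exact .inl <| contains_cycleGraph_five he01 he12 he23 he34 he40.symm hn02 hn03 hn13 h14 h24

/-- Every jewel (on vertex set {v 0, …, v 4} ∪ F, where v 0,…,v 4 play the roles of
v1,…,v5) contains an induced C5, an induced bull, or an induced anchor. -/
theorem stmt_5 {V : Type*} (G : SimpleGraph V)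
    (v : Fin 5 → V) (F : Set V)
    (hinj : Function.Injective v) (hdisj : ∀ i, v i ∉ F)
    (hconn : (G.induce F).Connected)
    (he01 : G.Adj (v 0) (v 1)) (he12 : G.Adj (v 1) (v 2)) (he23 : G.Adj (v 2) (v 3))
    (he34 : G.Adj (v 3) (v 4)) (he40 : G.Adj (v 4) (v 0))
    (hn02 : ¬ G.Adj (v 0) (v 2)) (hn13 : ¬ G.Adj (v 1) (v 3)) (hn03 : ¬ G.Adj (v 0) (v 3))
    (hF1 : ∀ x ∈ F, ¬ G.Adj (v 1) x) (hF2 : ∀ x ∈ F, ¬ G.Adj (v 2) x)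
    (hF4 : ∀ x ∈ F, ¬ G.Adj (v 4) x)
    (hv0 : ∃ x ∈ F, G.Adj (v 0) x) (hv3 : ∃ x ∈ F, G.Adj (v 3) x)
    (hcover : ∀ x : V, x ∈ F ∨ ∃ i, x = v i) :
    Contains G (SimpleGraph.cycleGraph 5) ∨ Contains G bull ∨ ContainsAnchor G :=
  stmt_5_general G v F he01 he12 he23 he34 he40 hn02 hn13 hn03 hF1 hF2 hF4 hv0 hv3
end

section
/- Let G be a graph and X a homogeneous set in G. If G contains an odd hole, then at least one of the following graphs contains an odd hole: the graph G1(X) obtained from G by deleting all but one vertex of X, or the induced subgraph G2(X) = G[X]. -/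
open SimpleGraph

/-
Being a module (every outside vertex sees all of the set or none of it) pulls back along induced
embeddings, so a homogeneous set `X` pulls back to a module of an odd hole `C`. Cycles of length at
least five are prime: their only modules are the whole vertex set and sets of at most one
vertex. In the first case `C` is an odd hole of `G[X]`. In the second case replacing the (at
most one) vertex of `C` in `X` by `x` does not change any adjacency, so `C` survives in `G1(X)`.
-/

open Fin.CommRing

namespace SimpleGraph

variable {V W : Type*} {G : SimpleGraph V} {H : SimpleGraph W} {S : Set V}

/-- A homogeneous set without the size conditions, i.e. a module of `G`. -/
def IsModule (G : SimpleGraph V) (S : Set V) : Prop :=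
  ∀ v ∉ S, (∀ x ∈ S, G.Adj v x) ∨ (∀ x ∈ S, ¬ G.Adj v x)

theorem IsModule.adj_iff (hS : G.IsModule S) {v a b : V} (hv : v ∉ S) (ha : a ∈ S)
    (hb : b ∈ S) : G.Adj v a ↔ G.Adj v b := by
  rcases hS v hv with h | h
  · exact iff_of_true (h a ha) (h b hb)
  · exact iff_of_false (h a ha) (h b hb)

theorem IsModule.preimage (hS : G.IsModule S) (f : H ↪g G) : H.IsModule (f ⁻¹' S) := by
  intro v hv
  rcases hS (f v) hv with h | h
  · exact Or.inl fun w hw => f.map_adj_iff.mp (h _ hw)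
  · exact Or.inr fun w hw => f.map_adj_iff.not.mp (h _ hw)

theorem IsModule.exists_complete (hS : G.IsModule S) (hG : G.Preconnected) {a u : V}
    (ha : a ∈ S) (hu : u ∉ S) : ∃ v ∉ S, ∀ b ∈ S, G.Adj v b := by
  obtain ⟨p⟩ := hG a u
  obtain ⟨d, -, hd₁, hd₂⟩ := p.exists_boundary_dart S ha hu
  refine ⟨d.snd, hd₂, ?_⟩
  rcases hS d.snd hd₂ with h | h
  · exact h
  · exact absurd d.adj.symm (h d.fst hd₁)

theorem eq_univ_or_subsingleton_of_isModule_cycleGraph {n : ℕ} (hn : 5 ≤ n)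
    {S : Set (Fin n)} (hS : (cycleGraph n).IsModule S) : S = Set.univ ∨ S.Subsingleton := by
  by_contra! hS_proper
  obtain ⟨u, hu⟩ := Set.ne_univ_iff_exists_notMem S |>.mp hS_proper.1
  obtain ⟨a, ha, b, hb, hab⟩ := hS_proper.2
  obtain ⟨m, rfl⟩ : ∃ m, n = m + 5 := ⟨n - 5, by omega⟩
  obtain ⟨j, -, hjS⟩ := hS.exists_complete cycleGraph_preconnected ha hu
  have hS_sub : S ⊆ {j - 1, j + 1} := fun s hs => by
    rw [← cycleGraph_neighborSet]
    exact hjS s hs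
  have ⟨hpred, hsucc⟩ : j - 1 ∈ S ∧ j + 1 ∈ S := by
    rcases hS_sub ha with rfl | rfl <;> rcases hS_sub hb with rfl | rfl <;> simp_all
  -- `j + 2` lies outside `S`, sees `j + 1 ∈ S`, hence sees `j - 1`: impossible in a long cycle.
  have hnot : j + 2 ∉ S := by
    intro h
    rcases hS_sub h with h | h
    · have := congrArg (· - (j - 1)) h
      ring_nf at this
      simp [Fin.ext_iff, Nat.mod_eq_of_lt] at this
    · simp [Fin.ext_iff, Nat.mod_eq_of_lt] at h
  have hadj : (cycleGraph (m + 5)).Adj (j + 2) (j - 1) :=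
    (hS.adj_iff hnot hsucc hpred).mp (by rw [cycleGraph_adj]; left; ring)
  rw [cycleGraph_adj] at hadj
  ring_nf at hadj
  simp [Fin.ext_iff, Fin.val_neg', Nat.mod_eq_of_lt] at hadj

def Embedding.codRestrict (f : H ↪g G) (s : Set V) (h : ∀ w, f w ∈ s) : H ↪g G.induce s where
  toFun w := ⟨f w, h w⟩
  inj' _ _ hw := f.injective (congrArg Subtype.val hw)
  map_rel_iff' := f.map_adj_iff

theorem IsModule.nonempty_embedding_induce_compl_union (hS : G.IsModule S) {x : V}
    (hx : x ∈ S) (f : H ↪g G) (hf : (f ⁻¹' S).Subsingleton) :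
    Nonempty (H ↪g G.induce (Sᶜ ∪ {x})) := by
  classical
  let g : W → V := fun w => if f w ∈ S then x else f w
  have g_adj : ∀ w₁ w₂, G.Adj (g w₁) (g w₂) ↔ H.Adj w₁ w₂ := by
    intro w₁ w₂
    rw [← f.map_adj_iff]
    by_cases h₁ : f w₁ ∈ S <;> by_cases h₂ : f w₂ ∈ S <;> simp only [g, h₁, h₂, ↓reduceIte]
    · obtain rfl := hf h₁ h₂
      exact iff_of_false G.irrefl G.irrefl
    · rw [G.adj_comm, hS.adj_iff h₂ hx h₁, G.adj_comm]
    · exact hS.adj_iff h₁ hx h₂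
  have g_inj : Function.Injective g := by
    intro w₁ w₂ hw
    by_cases h₁ : f w₁ ∈ S <;> by_cases h₂ : f w₂ ∈ S <;> simp only [g, h₁, h₂, ↓reduceIte] at hw
    · exact hf h₁ h₂
    · exact absurd (hw ▸ hx) h₂
    · exact absurd (hw.symm ▸ hx) h₁
    · exact f.injective hw
  let g' : H ↪g G := ⟨⟨g, g_inj⟩, g_adj _ _⟩
  refine ⟨g'.codRestrict _ fun w => ?_⟩
  by_cases h : f w ∈ S
  · exact Or.inr (by simp [g', g, h])
  · exact Or.inl (by simp [g', g, h])

end SimpleGraph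

theorem IsHomogeneousSet.isModule {V : Type*} [Fintype V] {G : SimpleGraph V} {X : Finset V}
    (hX : IsHomogeneousSet G X) : G.IsModule ↑X :=
  hX.2.2

theorem stmt_7 {V : Type*} [Fintype V] (G : SimpleGraph V) (X : Finset V)
    (hX : IsHomogeneousSet G X) (x : V) (hx : x ∈ X)
    (hodd : HasOddHole G) :
    HasOddHole (G.induce ((↑X : Set V)ᶜ ∪ {x})) ∨
      HasOddHole (G.induce (↑X : Set V)) := by
  obtain ⟨n, hn, hn_odd, ⟨e⟩⟩ := hodd
  rcases eq_univ_or_subsingleton_of_isModule_cycleGraph hn (hX.isModule.preimage e)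
    with hall | hsub
  · exact Or.inr ⟨n, hn, hn_odd, ⟨e.codRestrict _ fun i => Set.eq_univ_iff_forall.mp hall i⟩⟩
  · exact Or.inl ⟨n, hn, hn_odd, hX.isModule.nonempty_embedding_induce_compl_union hx e hsub⟩
end

section
/- In a jewel, if there exists an induced path P from v1 to v4 with exactly one internal vertex, all internal vertices in F, then {v1, v2, v3, v4} ∪ P* induces a C5; if P has exactly two internal vertices, then {v1, v5, v4} ∪ P* induces a C5. -/
open SimpleGraph

lemma cycle5_helper {V : Type*} (G : SimpleGraph V) (a b c d e : V)
    (hab : G.Adj a b) (hbc : G.Adj b c) (hcd : G.Adj c d) (hde : G.Adj d e)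
    (hea : G.Adj e a)
    (nac : ¬ G.Adj a c) (nad : ¬ G.Adj a d) (nbd : ¬ G.Adj b d)
    (nbe : ¬ G.Adj b e) (nce : ¬ G.Adj c e)
    (dac : a ≠ c) (dad : a ≠ d) (dbd : b ≠ d) (dbe : b ≠ e) (dce : c ≠ e) :
    Nonempty (G.induce ({a, b, c, d, e} : Set V) ≃g SimpleGraph.cycleGraph 5) := by
  set S : Set V := {a, b, c, d, e} with hS
  let u : Fin 5 → V := fun i => match i with
    | 0 => a | 1 => b | 2 => c | 3 => d | 4 => e
  have hmem : ∀ i, u i ∈ S := by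
    intro i; fin_cases i <;> simp [S, u]
  have hinj : Function.Injective u := by
    intro i j hij
    fin_cases i <;> fin_cases j <;> simp_all [u] <;>
      first
      | rfl
      | exact absurd hij hab.ne
      | exact absurd hij hab.ne'
      | exact absurd hij hbc.ne
      | exact absurd hij hbc.ne'
      | exact absurd hij hcd.ne
      | exact absurd hij hcd.ne'
      | exact absurd hij hde.ne
      | exact absurd hij hde.ne'
      | exact absurd hij hea.ne
      | exact absurd hij hea.ne'
      | exact absurd hij dac
      | exact absurd hij dac.symm
      | exact absurd hij dad
      | exact absurd hij dad.symm
      | exact absurd hij dbd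
      | exact absurd hij dbd.symm
      | exact absurd hij dbe
      | exact absurd hij dbe.symm
      | exact absurd hij dce
      | exact absurd hij dce.symm
  have hadj : ∀ i j : Fin 5, G.Adj (u i) (u j) ↔ (SimpleGraph.cycleGraph 5).Adj i j := by
    intro i j
    fin_cases i <;> fin_cases j <;>
      first
      | exact iff_of_false (G.irrefl) (by decide)
      | exact iff_of_true hab (by decide)
      | exact iff_of_true hab.symm (by decide)
      | exact iff_of_true hbc (by decide)
      | exact iff_of_true hbc.symm (by decide)
      | exact iff_of_true hcd (by decide)
      | exact iff_of_true hcd.symm (by decide)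
      | exact iff_of_true hde (by decide)
      | exact iff_of_true hde.symm (by decide)
      | exact iff_of_true hea (by decide)
      | exact iff_of_true hea.symm (by decide)
      | exact iff_of_false nac (by decide)
      | exact iff_of_false (fun h => nac h.symm) (by decide)
      | exact iff_of_false nad (by decide)
      | exact iff_of_false (fun h => nad h.symm) (by decide)
      | exact iff_of_false nbd (by decide)
      | exact iff_of_false (fun h => nbd h.symm) (by decide)
      | exact iff_of_false nbe (by decide)
      | exact iff_of_false (fun h => nbe h.symm) (by decide)
      | exact iff_of_false nce (by decide)
      | exact iff_of_false (fun h => nce h.symm) (by decide)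
  let f : Fin 5 → S := fun i => ⟨u i, hmem i⟩
  have hfinj : Function.Injective f := fun i j h => hinj (congrArg Subtype.val h)
  have hfsurj : Function.Surjective f := by
    rintro ⟨x, hx⟩
    simp only [S, Set.mem_insert_iff, Set.mem_singleton_iff] at hx
    rcases hx with h | h | h | h | h
    · exact ⟨0, by simp [f, u, h]⟩
    · exact ⟨1, by simp [f, u, h]⟩
    · exact ⟨2, by simp [f, u, h]⟩
    · exact ⟨3, by simp [f, u, h]⟩
    · exact ⟨4, by simp [f, u, h]⟩
  refine ⟨(SimpleGraph.Iso.symm ?_ : G.induce S ≃g SimpleGraph.cycleGraph 5)⟩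
  exact { toEquiv := Equiv.ofBijective f ⟨hfinj, hfsurj⟩
          map_rel_iff' := fun {i j} => by
            show (G.induce S).Adj (f i) (f j) ↔ _
            rw [SimpleGraph.comap_adj]
            exact hadj i j }


/-- In a jewel: an induced path v1-w-v4 with w ∈ F gives that {v1, v2, v3, v4, w}
induces a C5; an induced path v1-w₁-w₂-v4 with w₁, w₂ ∈ F gives that
{v1, v5, v4, w₁, w₂} induces a C5.  (Here v1,…,v5 are v 0,…,v 4.) -/
theorem stmt_16 {V : Type*} (G : SimpleGraph V)
    (v : Fin 5 → V) (F : Set V)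
    (hinj : Function.Injective v) (hdisj : ∀ i, v i ∉ F)
    (hconn : (G.induce F).Connected)
    (he01 : G.Adj (v 0) (v 1)) (he12 : G.Adj (v 1) (v 2)) (he23 : G.Adj (v 2) (v 3))
    (he34 : G.Adj (v 3) (v 4)) (he40 : G.Adj (v 4) (v 0))
    (hn02 : ¬ G.Adj (v 0) (v 2)) (hn13 : ¬ G.Adj (v 1) (v 3)) (hn03 : ¬ G.Adj (v 0) (v 3))
    (hF1 : ∀ x ∈ F, ¬ G.Adj (v 1) x) (hF2 : ∀ x ∈ F, ¬ G.Adj (v 2) x)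
    (hF4 : ∀ x ∈ F, ¬ G.Adj (v 4) x)
    (hv0 : ∃ x ∈ F, G.Adj (v 0) x) (hv3 : ∃ x ∈ F, G.Adj (v 3) x)
    (hcover : ∀ x : V, x ∈ F ∨ ∃ i, x = v i) :
    (∀ w ∈ F, G.Adj (v 0) w → G.Adj w (v 3) →
      Nonempty (G.induce ({v 0, v 1, v 2, v 3, w} : Set V) ≃g SimpleGraph.cycleGraph 5)) ∧
    (∀ w₁ ∈ F, ∀ w₂ ∈ F, w₁ ≠ w₂ →
      G.Adj (v 0) w₁ → G.Adj w₁ w₂ → G.Adj w₂ (v 3) →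
      ¬ G.Adj (v 0) w₂ → ¬ G.Adj w₁ (v 3) →
      Nonempty (G.induce ({v 0, v 4, v 3, w₁, w₂} : Set V) ≃g SimpleGraph.cycleGraph 5)) := by
  constructor
  · intro w hw hw0 hw3
    exact cycle5_helper G (v 0) (v 1) (v 2) (v 3) w
      he01 he12 he23 hw3.symm hw0.symm
      hn02 hn03 hn13 (hF1 w hw) (hF2 w hw)
      (fun h => by have := hinj h; simp at this)
      (fun h => by have := hinj h; simp at this)
      (fun h => by have := hinj h; simp at this)
      (fun h => hdisj 1 (h ▸ hw))
      (fun h => hdisj 2 (h ▸ hw))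
  · intro w1 hw1 w2 hw2 hne h01 h12 h23 hn02' hn13'
    rw [show ({v 0, v 4, v 3, w1, w2} : Set V) = {v 0, v 4, v 3, w2, w1} by rw [Set.pair_comm]]
    exact cycle5_helper G (v 0) (v 4) (v 3) w2 w1
      he40.symm he34.symm h23.symm h12.symm h01.symm
      (fun h => hn03 h) hn02' (fun h => hF4 w2 hw2 h)
      (fun h => hF4 w1 hw1 h) (fun h => hn13' h.symm)
      (fun h => by have := hinj h; simp at this)
      (fun h => hdisj 0 (h ▸ hw2))
      (fun h => hdisj 4 (h ▸ hw2))
      (fun h => hdisj 4 (h ▸ hw1))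
      (fun h => hdisj 3 (h ▸ hw1))
end
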